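/- arXiv:1404.2224 — 4 statements merged into one kernel-verified Lean document; each statement's English description precedes it below -/
import Mathlib

section
/- For every real x ≥ 1 and every positive integer q, |∑_{a ≤ x, gcd(a,q)=1} μ(a)/a| ≤ 1, where the sum is over positive integers a ≤ x coprime to q and μ is the Möbius function. -/
/-!
Let `f` be `μ` restricted to integers coprime to `q` and `N = ⌊x⌋`. Writing
`x / d = ⌊N / d⌋ + {x / d}` gives
`x ∑_{d ≤ N} f(d) / d = ∑_{n ≤ N} (f * 1)(n) + ∑_{n ≤ N} f(n) {x / n}`.
Multiplicativity shows that `(f * 1)(n)` is `1` when every prime factor of `n` divides `q` and `0`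
otherwise, so it vanishes at each `n ≥ 2` coprime to `q`, the only `n ≥ 2` where `f(n) ≠ 0`.
Hence every `n ≥ 2` contributes a number in `[-1, 1]` and `n = 1` contributes `1 + {x}`, so the
right-hand side lies in `[-N, N + {x}] ⊆ [-x, x]`.
-/

open ArithmeticFunction ArithmeticFunction.Moebius ArithmeticFunction.zeta Finset

namespace ArithmeticFunction

def coprimeMoebius (R : Type*) [Ring R] (q : ℕ) : ArithmeticFunction R :=
  ⟨fun d => if d.Coprime q then (μ d : R) else 0, by simp⟩

section CommRing

variable {R : Type*} [CommRing R]

theorem coprimeMoebius_apply (q d : ℕ) :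
    coprimeMoebius R q d = if d.Coprime q then (μ d : R) else 0 :=
  rfl

theorem isMultiplicative_coprimeMoebius (q : ℕ) : (coprimeMoebius R q).IsMultiplicative := by
  refine ⟨by simp [coprimeMoebius_apply], fun {m n} hmn => ?_⟩
  simp only [coprimeMoebius_apply, Nat.coprime_mul_iff_left,
    isMultiplicative_moebius.map_mul_of_coprime hmn, Int.cast_mul]
  split_ifs <;> simp_all

theorem coprimeMoebius_mul_zeta (q : ℕ) :
    coprimeMoebius R q * (ζ : ArithmeticFunction R) =
      prodPrimeFactors fun p => if p ∣ q then 1 else 0 := by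
  refine (IsMultiplicative.eq_iff_eq_on_prime_powers _
    ((isMultiplicative_coprimeMoebius q).mul isMultiplicative_zeta.natCast) _
    (IsMultiplicative.prodPrimeFactors _)).2 fun p i hp => ?_
  rcases i with _ | i
  · simp [coprimeMoebius_apply]
  rw [coe_mul_zeta_apply, Nat.sum_divisors_prime_pow hp, sum_range_succ', sum_range_succ',
    prodPrimeFactors_apply (pow_ne_zero _ hp.ne_zero), Nat.primeFactors_prime_pow i.succ_ne_zero hp,
    prod_singleton]
  have hsq k : coprimeMoebius R q (p ^ (k + 2)) = 0 := by
    simp [coprimeMoebius_apply, moebius_apply_prime_pow hp]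
  rw [sum_eq_zero fun k _ => hsq k, zero_add, pow_one, pow_zero,
    (isMultiplicative_coprimeMoebius q).map_one, coprimeMoebius_apply, moebius_apply_prime hp]
  by_cases hpq : p ∣ q <;> simp [hpq, hp.coprime_iff_not_dvd]

theorem coprimeMoebius_mul_zeta_apply_eq_zero_or_one (q n : ℕ) :
    (coprimeMoebius R q * ζ) n = 0 ∨ (coprimeMoebius R q * ζ) n = 1 := by
  rw [coprimeMoebius_mul_zeta]
  rcases eq_or_ne n 0 with rfl | hn
  · simp
  rw [prodPrimeFactors_apply hn, prod_boole]
  split_ifs <;> simp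

theorem coprimeMoebius_mul_zeta_apply_of_coprime {q n : ℕ} (hn : 2 ≤ n) (hnq : n.Coprime q) :
    (coprimeMoebius R q * ζ) n = 0 := by
  obtain ⟨p, hp, hpn⟩ := Nat.exists_prime_and_dvd (show n ≠ 1 by omega)
  rw [coprimeMoebius_mul_zeta, prodPrimeFactors_apply (by omega)]
  exact prod_eq_zero (Nat.mem_primeFactors.2 ⟨hp, hpn, by omega⟩)
    (if_neg fun hpq => Nat.Prime.not_coprime_iff_dvd.2 ⟨p, hp, hpn, hpq⟩ hnq)

end CommRing

theorem mul_sum_Ioc_div_eq (f : ArithmeticFunction ℝ) {x : ℝ} (hx : 0 ≤ x) :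
    x * ∑ d ∈ Ioc 0 ⌊x⌋₊, f d / d =
      ∑ n ∈ Ioc 0 ⌊x⌋₊, ((f * ζ) n + f n * Int.fract (x / n)) := by
  rw [sum_add_distrib, sum_Ioc_mul_zeta_eq_sum, ← sum_add_distrib, mul_sum]
  refine sum_congr rfl fun n _ => ?_
  rw [← Nat.floor_div_natCast, natCast_floor_eq_intCast_floor (by positivity), ← mul_add,
    Int.floor_add_fract]
  ring

theorem mul_zeta_apply_add_mul_fract_mem_Icc {f : ArithmeticFunction ℝ} (hf1 : f 1 = 1)
    (hf : ∀ n, |f n| ≤ 1) (hg : ∀ n, (f * ζ) n ∈ Set.Icc (0 : ℝ) 1)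
    (hfg : ∀ n, 2 ≤ n → f n = 0 ∨ (f * ζ) n = 0) {n : ℕ} (hn : n ≠ 0) (y : ℝ) :
    (f * ζ) n + f n * Int.fract y ∈ Set.Icc (-1) (1 + if n = 1 then Int.fract y else 0) := by
  have hy := Int.fract_nonneg y
  obtain rfl | hn2 : n = 1 ∨ 2 ≤ n := by omega
  · rw [coe_mul_zeta_apply, Nat.divisors_one, sum_singleton, hf1, one_mul, if_pos rfl]
    exact ⟨by linarith, le_rfl⟩
  have hfy : |f n * Int.fract y| ≤ 1 := by
    rw [abs_mul, abs_of_nonneg hy]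
    exact mul_le_one₀ (hf n) hy (Int.fract_lt_one y).le
  rw [if_neg (by omega), Set.mem_Icc]
  rcases hfg n hn2 with h | h <;> simp only [h, zero_mul, add_zero, zero_add]
  · exact ⟨by linarith [(hg n).1], by linarith [(hg n).2]⟩
  · exact abs_le.1 hfy

theorem abs_sum_Ioc_div_le_one {f : ArithmeticFunction ℝ} (hf1 : f 1 = 1)
    (hf : ∀ n, |f n| ≤ 1) (hg : ∀ n, (f * ζ) n ∈ Set.Icc (0 : ℝ) 1)
    (hfg : ∀ n, 2 ≤ n → f n = 0 ∨ (f * ζ) n = 0) {x : ℝ} (hx : 1 ≤ x) :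
    |∑ d ∈ Ioc 0 ⌊x⌋₊, f d / d| ≤ 1 := by
  have hx0 : 0 < x := by linarith
  have hterm n (hn : n ∈ Ioc 0 ⌊x⌋₊) :=
    mul_zeta_apply_add_mul_fract_mem_Icc hf1 hf hg hfg (mem_Ioc.1 hn).1.ne' (x / n)
  have h1 : 1 ∈ Ioc 0 ⌊x⌋₊ := mem_Ioc.2 ⟨one_pos, Nat.le_floor (by simpa using hx)⟩
  rw [← mul_le_mul_iff_of_pos_left hx0, mul_one, ← abs_of_pos hx0, ← abs_mul, abs_of_pos hx0,
    mul_sum_Ioc_div_eq f hx0.le, abs_le]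
  constructor
  · calc -x ≤ ∑ _n ∈ Ioc 0 ⌊x⌋₊, (-1 : ℝ) := by simp [Nat.floor_le hx0.le]
      _ ≤ _ := sum_le_sum fun n hn => (hterm n hn).1
  · calc _ ≤ ∑ n ∈ Ioc 0 ⌊x⌋₊, (1 + if n = 1 then Int.fract (x / n) else 0) :=
          sum_le_sum fun n hn => (hterm n hn).2
      _ = ⌊x⌋₊ + Int.fract x := by simp [sum_add_distrib, h1]
      _ = x := by rw [natCast_floor_eq_intCast_floor hx0.le, Int.floor_add_fract]

end ArithmeticFunction

theorem abs_sum_moebius_div_le_one_general (x : ℝ) (hx : 1 ≤ x) (q : ℕ) :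
    |∑ a ∈ (Finset.Icc 1 ⌊x⌋₊).filter (fun a => Nat.gcd a q = 1),
        (μ a : ℝ) / a| ≤ 1 := by
  have hsum : ∑ a ∈ (Icc 1 ⌊x⌋₊).filter (fun a => Nat.gcd a q = 1), (μ a : ℝ) / a =
      ∑ d ∈ Ioc 0 ⌊x⌋₊, coprimeMoebius ℝ q d / d := by
    rw [sum_filter]
    exact sum_congr rfl fun d _ => by
      split_ifs with h <;> simp [coprimeMoebius_apply, Nat.coprime_iff_gcd_eq_one, h]
  rw [hsum]
  refine abs_sum_Ioc_div_le_one (by simp [coprimeMoebius_apply]) (fun n => ?_)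
    (fun n => ?_) (fun n hn => ?_) hx
  · rw [coprimeMoebius_apply]
    split_ifs
    · exact_mod_cast abs_moebius_le_one
    · simp
  · rcases coprimeMoebius_mul_zeta_apply_eq_zero_or_one (R := ℝ) q n with h | h <;> simp [h]
  · by_cases hnq : n.Coprime q
    · exact .inr (coprimeMoebius_mul_zeta_apply_of_coprime hn hnq)
    · exact .inl (if_neg hnq)

/-- The elementary bound: `|∑_{a ≤ x, (a,q)=1} μ(a)/a| ≤ 1`. -/
theorem abs_sum_moebius_div_le_one (x : ℝ) (hx : 1 ≤ x) (q : ℕ) (hq : 0 < q) :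
    |∑ a ∈ (Finset.Icc 1 ⌊x⌋₊).filter (fun a => Nat.gcd a q = 1),
        (μ a : ℝ) / a| ≤ 1 :=
  abs_sum_moebius_div_le_one_general x hx q
end

section
/- Vaughan's identity: for all real U, V ≥ 0 and every integer n ≥ 1, Λ(n) = (μ_{≤U} ∗ log)(n) − (Λ_{≤V} ∗ μ_{≤U} ∗ 1)(n) + (1 ∗ μ_{>U} ∗ Λ_{>V})(n) + Λ_{≤V}(n), where ∗ denotes Dirichlet convolution. -/
open ArithmeticFunction
open scoped ArithmeticFunction.Moebius
open scoped ArithmeticFunction.zeta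

/-- Dirichlet convolution of two functions `ℕ → ℝ`. -/
noncomputable def dconv (f g : ℕ → ℝ) (n : ℕ) : ℝ :=
  ∑ d ∈ n.divisors, f d * g (n / d)

/-- Truncation of `f` to arguments `n ≤ W`. -/
noncomputable def truncLe (f : ℕ → ℝ) (W : ℝ) (n : ℕ) : ℝ :=
  if (n : ℝ) ≤ W then f n else 0

/-- Truncation of `f` to arguments `n > W`. -/
noncomputable def truncGt (f : ℕ → ℝ) (W : ℝ) (n : ℕ) : ℝ :=
  if (n : ℝ) ≤ W then 0 else f n

/-!
Writing `μ = μ_{≤U} + μ_{>U}` and `Λ = Λ_{≤V} + Λ_{>V}`, Vaughan's identity is a purely algebraic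
consequence of `μ ∗ 1 = δ` and `Λ ∗ 1 = log` in the commutative ring of arithmetic functions:
expanding `1 ∗ (μ - μ_{≤U}) ∗ (Λ - Λ_{≤V})` with these two relations leaves exactly the other terms.
-/

noncomputable def arithOfFun (f : ℕ → ℝ) : ArithmeticFunction ℝ :=
  ⟨fun n => if n = 0 then 0 else f n, if_pos rfl⟩

lemma arithOfFun_apply (f : ℕ → ℝ) {n : ℕ} (hn : n ≠ 0) : arithOfFun f n = f n := if_neg hn

lemma arithOfFun_eq {f : ℕ → ℝ} {F : ArithmeticFunction ℝ} (h : ∀ n ≠ 0, f n = F n) :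
    arithOfFun f = F := by
  ext n
  rcases eq_or_ne n 0 with rfl | hn
  · simp
  · rw [arithOfFun_apply f hn, h n hn]

lemma arithOfFun_mul (f g : ℕ → ℝ) : arithOfFun f * arithOfFun g = arithOfFun (dconv f g) := by
  ext n
  rcases eq_or_ne n 0 with rfl | hn
  · simp
  rw [arithOfFun_apply _ hn, mul_apply, dconv,
    Nat.sum_divisorsAntidiagonal (f := fun a b => arithOfFun f a * arithOfFun g b)]
  refine Finset.sum_congr rfl fun d hd => ?_
  have hd0 : d ≠ 0 := Nat.ne_of_gt (Nat.pos_of_mem_divisors hd)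
  have hq0 : n / d ≠ 0 := Nat.ne_of_gt <| Nat.pos_of_mem_divisors <|
    Nat.mem_divisors.2 ⟨Nat.div_dvd_of_dvd (Nat.dvd_of_mem_divisors hd), hn⟩
  rw [arithOfFun_apply _ hd0, arithOfFun_apply _ hq0]

lemma arithOfFun_truncLe_add_truncGt (f : ℕ → ℝ) (W : ℝ) :
    arithOfFun (truncLe f W) + arithOfFun (truncGt f W) = arithOfFun f := by
  ext n
  rcases eq_or_ne n 0 with rfl | hn
  · simp
  simp only [ArithmeticFunction.add_apply, arithOfFun_apply _ hn, truncLe, truncGt]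
  split_ifs <;> simp

theorem vaughan_decomposition {R : Type*} [CommRing R] {Λ' log' μ' ζ' M₁ M₂ L₁ L₂ : R}
    (hμζ : μ' * ζ' = 1) (hΛζ : Λ' * ζ' = log') (hμ : M₁ + M₂ = μ') (hΛ : L₁ + L₂ = Λ') :
    Λ' = M₁ * log' - L₁ * (M₁ * ζ') + ζ' * (M₂ * L₂) + L₁ := by
  subst hΛζ hμ hΛ
  linear_combination (-L₂) * hμζ

theorem vaughan_identity_general (U V : ℝ)
    (n : ℕ) (hn : 1 ≤ n) :
    Λ n =
      dconv (truncLe (fun m => (μ m : ℝ)) U) (fun m => Real.log m) n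
        - dconv (truncLe (fun m => Λ m) V)
            (dconv (truncLe (fun m => (μ m : ℝ)) U) (fun _ => (1 : ℝ))) n
        + dconv (fun _ => (1 : ℝ))
            (dconv (truncGt (fun m => (μ m : ℝ)) U) (truncGt (fun m => Λ m) V)) n
        + truncLe (fun m => Λ m) V n := by
  have hμ : arithOfFun (fun m => (μ m : ℝ)) = (μ : ArithmeticFunction ℝ) :=
    arithOfFun_eq fun m _ => (intCoe_apply ..).symm
  have hΛ : arithOfFun (fun m => Λ m) = Λ := arithOfFun_eq fun _ _ => rfl
  have hζ : arithOfFun (fun _ => (1 : ℝ)) = (ζ : ArithmeticFunction ℝ) :=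
    arithOfFun_eq fun m hm => by rw [natCoe_apply, zeta_apply_ne hm, Nat.cast_one]
  have hlog : arithOfFun (fun m => Real.log m) = log := arithOfFun_eq fun _ _ => (log_apply ..).symm
  have key := vaughan_decomposition (ζ' := arithOfFun fun _ => 1)
    (log' := arithOfFun fun m => Real.log m) (by rw [hμ, hζ]; exact coe_moebius_mul_coe_zeta)
    (by rw [hΛ, hζ, hlog]; exact vonMangoldt_mul_zeta) (arithOfFun_truncLe_add_truncGt _ U)
    (arithOfFun_truncLe_add_truncGt _ V)
  simp only [arithOfFun_mul] at key
  have hn0 : n ≠ 0 := by omega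
  simpa only [sub_eq_add_neg, ArithmeticFunction.add_apply,
    ArithmeticFunction.neg_apply, arithOfFun_apply _ hn0] using
    congrArg (· n) key

/-- **Vaughan's identity**:
`Λ = μ_{≤U} ∗ log − Λ_{≤V} ∗ μ_{≤U} ∗ 1 + 1 ∗ μ_{>U} ∗ Λ_{>V} + Λ_{≤V}`. -/
theorem vaughan_identity (U V : ℝ) (hU : 0 ≤ U) (hV : 0 ≤ V)
    (n : ℕ) (hn : 1 ≤ n) :
    Λ n =
      dconv (truncLe (fun m => (μ m : ℝ)) U) (fun m => Real.log m) n
        - dconv (truncLe (fun m => Λ m) V)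
            (dconv (truncLe (fun m => (μ m : ℝ)) U) (fun _ => (1 : ℝ))) n
        + dconv (fun _ => (1 : ℝ))
            (dconv (truncGt (fun m => (μ m : ℝ)) U) (truncGt (fun m => Λ m) V)) n
        + truncLe (fun m => Λ m) V n :=
  vaughan_identity_general U V n hn
end

section
/- Selberg's identity: for every integer n ≥ 1, Λ(n)·log n = (μ ∗ log²)(n) − (Λ ∗ Λ)(n), where log² denotes the arithmetic function n ↦ (log n)² and ∗ denotes Dirichlet convolution. -/
/-!
Multiplication by `log` is a derivation of the Dirichlet convolution ring, since
`log n = log d + log (n / d)` for `d ∣ n`. Applying it to `ζ ∗ Λ = log` gives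
`log² = log ∗ Λ + ζ ∗ (Λ · log)`, and convolving with `μ` (using `μ ∗ log = Λ`, `μ ∗ ζ = 1`)
yields `μ ∗ log² = Λ ∗ Λ + Λ · log`.
-/

open ArithmeticFunction
open scoped ArithmeticFunction.Moebius ArithmeticFunction.zeta

theorem dconv_eq_mul_apply (f g : ArithmeticFunction ℝ) (n : ℕ) :
    dconv f g n = (f * g) n := by
  rw [mul_apply, Nat.sum_divisorsAntidiagonal (fun a b => f a * g b)]
  rfl

theorem log_pmul_mul (f g : ArithmeticFunction ℝ) :
    log.pmul (f * g) = log.pmul f * g + f * log.pmul g := by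
  ext n
  simp only [pmul_apply, mul_apply, ArithmeticFunction.add_apply, log_apply, Finset.mul_sum,
    ← Finset.sum_add_distrib]
  refine Finset.sum_congr rfl fun p hp => ?_
  obtain ⟨rfl, hn⟩ := Nat.mem_divisorsAntidiagonal.mp hp
  obtain ⟨h₁, h₂⟩ := mul_ne_zero_iff.mp hn
  rw [Nat.cast_mul, Real.log_mul (Nat.cast_ne_zero.mpr h₁) (Nat.cast_ne_zero.mpr h₂)]
  ring

theorem moebius_mul_log_pmul_log :
    (μ : ArithmeticFunction ℝ) * log.pmul log = log.pmul Λ + Λ * Λ := by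
  have h := log_pmul_mul (ζ : ArithmeticFunction ℝ) Λ
  rw [zeta_mul_vonMangoldt, pmul_zeta] at h
  rw [h, mul_add, ← mul_assoc, ← mul_assoc, moebius_mul_log_eq_vonMangoldt,
    coe_moebius_mul_coe_zeta, one_mul, add_comm]

theorem selberg_identity_general (n : ℕ) :
    Λ n * Real.log n =
      dconv (fun m => (μ m : ℝ)) (fun m => (Real.log m) ^ 2) n
        - dconv (fun m => Λ m) (fun m => Λ m) n := by
  have hμ : dconv (fun m => (μ m : ℝ)) (fun m => (Real.log m) ^ 2) n
      = ((μ : ArithmeticFunction ℝ) * log.pmul log) n := by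
    rw [← dconv_eq_mul_apply]
    congr 1 with m
    exact sq _
  rw [hμ, dconv_eq_mul_apply Λ Λ, moebius_mul_log_pmul_log, ArithmeticFunction.add_apply,
    pmul_apply, log_apply]
  ring

/-- **Selberg's identity**: `Λ(n)·log n = (μ ∗ log²)(n) − (Λ ∗ Λ)(n)`. -/
theorem selberg_identity (n : ℕ) (hn : 1 ≤ n) :
    Λ n * Real.log n =
      dconv (fun m => (μ m : ℝ)) (fun m => (Real.log m) ^ 2) n
        - dconv (fun m => Λ m) (fun m => Λ m) n :=
  selberg_identity_general n
end

section
/- Let N ≥ 7. Suppose that (i) every even integer m with 4 ≤ m ≤ 4·10^18 + 2 can be written as the sum of two primes, and (ii) there exists a finite strictly increasing sequence of primes p₀ = 3 < p₁ < ⋯ < p_k with p_k ≥ N such that 4 ≤ p_{i+1} − p_i ≤ 4·10^18 for every 0 ≤ i < k. Then every odd integer n with 5 < n ≤ N can be written as the sum of three primes. -/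
/-!
Walk up the ladder to the last rung `p` with `p + 4 ≤ n`. Since consecutive rungs are at most
`4·10^18` apart, the even number `n - p` lies between `4` and `4·10^18 + 2`, so it is a sum of
two primes, and `n = p + (n - p)` is a sum of three.
-/

def BinaryGoldbachUpTo (M : ℕ) : Prop :=
  ∀ m : ℕ, Even m → 4 ≤ m → m ≤ M → ∃ p q : ℕ, p.Prime ∧ q.Prime ∧ m = p + q

theorem Nat.exists_le_lt_succ_of_le_of_lt (f : ℕ → ℕ) {x : ℕ} :
    ∀ {k : ℕ}, f 0 ≤ x → x < f k → ∃ i < k, f i ≤ x ∧ x < f (i + 1)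
  | 0, h0, hk => absurd h0 hk.not_ge
  | k + 1, h0, hk => by
    by_cases hxk : x < f k
    · obtain ⟨i, hik, hi⟩ := exists_le_lt_succ_of_le_of_lt f h0 hxk
      exact ⟨i, hik.trans k.lt_succ_self, hi⟩
    · exact ⟨k, k.lt_succ_self, not_lt.mp hxk, hk⟩

theorem Nat.apply_zero_le_of_forall_le_succ {f : ℕ → ℕ} {k : ℕ}
    (hf : ∀ i < k, f i ≤ f (i + 1)) : ∀ i ≤ k, f 0 ≤ f i
  | 0, _ => le_rfl
  | i + 1, hi => (apply_zero_le_of_forall_le_succ hf i (by omega)).trans (hf i (by omega))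

theorem BinaryGoldbachUpTo.exists_prime_add_prime_add_prime {M : ℕ} (hM : BinaryGoldbachUpTo M)
    (hMeven : Even M) {n q : ℕ} (hn : Odd n) (hq : q.Prime) (hq3 : 3 ≤ q) (hqn : q + 4 ≤ n)
    (hnq : n ≤ q + M + 1) : ∃ p₁ p₂ p₃ : ℕ, p₁.Prime ∧ p₂.Prime ∧ p₃.Prime ∧ n = p₁ + p₂ + p₃ := by
  have heven : Even (n - q) := Nat.Odd.sub_odd hn (hq.odd_of_ne_two (by omega))
  have hle : n - q ≤ M := by
    obtain ⟨a, ha⟩ := heven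
    obtain ⟨b, hb⟩ := hMeven
    omega
  obtain ⟨p₂, p₃, hp₂, hp₃, hsum⟩ := hM (n - q) heven (by omega) hle
  exact ⟨q, p₂, p₃, hq, hp₂, hp₃, by omega⟩

theorem ternary_goldbach_from_ladder_general (N : ℕ)
    (hbinary : ∀ m : ℕ, Even m → 4 ≤ m → m ≤ 4 * 10 ^ 18 + 2 →
      ∃ p q : ℕ, p.Prime ∧ q.Prime ∧ m = p + q)
    (hladder : ∃ (k : ℕ) (p : ℕ → ℕ),
      p 0 = 3 ∧
      (∀ i ≤ k, (p i).Prime) ∧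
      N ≤ p k ∧
      ∀ i < k, p i < p (i + 1) ∧ 4 ≤ p (i + 1) - p i ∧
        p (i + 1) - p i ≤ 4 * 10 ^ 18) :
    ∀ n : ℕ, Odd n → 5 < n → n ≤ N →
      ∃ p q r : ℕ, p.Prime ∧ q.Prime ∧ r.Prime ∧ n = p + q + r := by
  intro n hn h5 hnN
  obtain ⟨k, p, hp0, hprime, hNk, hstep⟩ := hladder
  have h7 : 7 ≤ n := by
    obtain ⟨t, rfl⟩ := hn
    omega
  obtain ⟨i, hik, hlow, hhigh⟩ :=
    Nat.exists_le_lt_succ_of_le_of_lt p (x := n - 4) (k := k) (by omega) (by omega)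
  have h3 : 3 ≤ p i := hp0 ▸ Nat.apply_zero_le_of_forall_le_succ (fun j hj ↦ (hstep j hj).1.le) i hik.le
  obtain ⟨-, -, hgap⟩ := hstep i hik
  exact BinaryGoldbachUpTo.exists_prime_add_prime_add_prime hbinary (by decide) hn
    (hprime i hik.le) h3 (by omega) (by omega)

/-- From a verification of the binary Goldbach conjecture up to `4·10^18 + 2`
and a prime ladder reaching `N`, the ternary Goldbach conjecture follows for
all odd `5 < n ≤ N`. -/
theorem ternary_goldbach_from_ladder (N : ℕ) (hN : 7 ≤ N)
    (hbinary : ∀ m : ℕ, Even m → 4 ≤ m → m ≤ 4 * 10 ^ 18 + 2 →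
      ∃ p q : ℕ, p.Prime ∧ q.Prime ∧ m = p + q)
    (hladder : ∃ (k : ℕ) (p : ℕ → ℕ),
      p 0 = 3 ∧
      (∀ i ≤ k, (p i).Prime) ∧
      N ≤ p k ∧
      ∀ i < k, p i < p (i + 1) ∧ 4 ≤ p (i + 1) - p i ∧
        p (i + 1) - p i ≤ 4 * 10 ^ 18) :
    ∀ n : ℕ, Odd n → 5 < n → n ≤ N →
      ∃ p q r : ℕ, p.Prime ∧ q.Prime ∧ r.Prime ∧ n = p + q + r :=
  ternary_goldbach_from_ladder_general N hbinary hladder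
end
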